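/- arXiv:2208.00144 — 3 statements merged into one kernel-verified Lean document; each statement's English description precedes it below -/
import Mathlib

section
/- Let G be a group, X a Hausdorff locally compact paracompact space, φ : G ↷ X a properly discontinuous action by homeomorphisms and x₀ ∈ X. Then the map φ_{x₀} : (G, ε_G) → (X, ε_φ) defined by φ_{x₀}(g) = φ(g, x₀) is a coarse embedding. -/
namespace Paper

open Set Topology

/-! ### Coarse structures -/

/-- The inverse of a relation `e ⊆ X × X`. -/
def invRel {X : Type*} (e : Set (X × X)) : Set (X × X) := {p | (p.2, p.1) ∈ e}

/-- The composition of relations: `compRel e e' = {(a,b) | ∃ c, (a,c) ∈ e ∧ (c,b) ∈ e'}`.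
This is `e' ∘ e` in the paper's notation. -/
def compRel {X : Type*} (e e' : Set (X × X)) : Set (X × X) :=
  {p | ∃ c, (p.1, c) ∈ e ∧ (c, p.2) ∈ e'}

/-- A coarse structure on a set `X`. -/
def IsCoarseStructure {X : Type*} (ε : Set (Set (X × X))) : Prop :=
  Set.diagonal X ∈ ε ∧
  (∀ e ∈ ε, ∀ e' : Set (X × X), e' ⊆ e → e' ∈ ε) ∧
  (∀ e ∈ ε, ∀ e' ∈ ε, e ∪ e' ∈ ε) ∧
  (∀ e ∈ ε, invRel e ∈ ε) ∧
  (∀ e ∈ ε, ∀ e' ∈ ε, compRel e e' ∈ ε)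

/-- The coarse structure generated by a family `A` of subsets of `X × X`:
the intersection of all coarse structures containing `A`. -/
def genCoarse {X : Type*} (A : Set (Set (X × X))) : Set (Set (X × X)) :=
  ⋂₀ {ε | IsCoarseStructure ε ∧ A ⊆ ε}

/-- The `u`-neighbourhood `𝔅(B, u)` of a subset `B`. -/
def Bnh {X : Type*} (B : Set X) (u : Set (X × X)) : Set X := {x | ∃ y ∈ B, (x, y) ∈ u}

/-- A subset `B` is bounded for the coarse structure `ε` if `B × B ∈ ε`. -/
def CBounded {X : Type*} (ε : Set (Set (X × X))) (B : Set X) : Prop := B ×ˢ B ∈ ε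

/-- A map is bornologous if it sends entourages to entourages. -/
def Bornologous {X Y : Type*} (ε : Set (Set (X × X))) (ζ : Set (Set (Y × Y)))
    (f : X → Y) : Prop :=
  ∀ e ∈ ε, Prod.map f f '' e ∈ ζ

/-- A map is (coarsely) proper if preimages of bounded sets are bounded. -/
def CProper {X Y : Type*} (ε : Set (Set (X × X))) (ζ : Set (Set (Y × Y)))
    (f : X → Y) : Prop :=
  ∀ B : Set Y, CBounded ζ B → CBounded ε (f ⁻¹' B)

/-- A coarse map is a proper bornologous map. -/
def CoarseMap {X Y : Type*} (ε : Set (Set (X × X))) (ζ : Set (Set (Y × Y)))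
    (f : X → Y) : Prop :=
  Bornologous ε ζ f ∧ CProper ε ζ f

/-- Two maps `f g : S → X` are close if `{(f s, g s) | s ∈ S}` is an entourage. -/
def Close {S X : Type*} (ε : Set (Set (X × X))) (f g : S → X) : Prop :=
  Set.range (fun s => (f s, g s)) ∈ ε

/-- A coarse equivalence: a coarse map with a coarse quasi-inverse. -/
def CoarseEquiv {X Y : Type*} (ε : Set (Set (X × X))) (ζ : Set (Set (Y × Y)))
    (f : X → Y) : Prop :=
  CoarseMap ε ζ f ∧
    ∃ g : Y → X, CoarseMap ζ ε g ∧ Close ζ (f ∘ g) id ∧ Close ε (g ∘ f) id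

/-- The subspace coarse structure on `A ⊆ Y`. -/
def SubCoarse {Y : Type*} (ζ : Set (Set (Y × Y))) (A : Set Y) : Set (Set (↥A × ↥A)) :=
  {e | Prod.map (Subtype.val : A → Y) (Subtype.val : A → Y) '' e ∈ ζ}

/-- A coarse embedding: a coarse map which is a coarse equivalence onto its image with
the subspace coarse structure. -/
def CoarseEmbedding {X Y : Type*} (ε : Set (Set (X × X))) (ζ : Set (Set (Y × Y)))
    (f : X → Y) : Prop :=
  CoarseMap ε ζ f ∧ CoarseEquiv ε (SubCoarse ζ (Set.range f)) (Set.rangeFactorization f)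

/-- A coarse space is coarsely connected if every pair lies in some entourage. -/
def CoarselyConnected {X : Type*} (ε : Set (Set (X × X))) : Prop :=
  ∀ x y : X, ∃ e ∈ ε, (x, y) ∈ e

/-- `A` is quasi-dense if `𝔅(A, e) = X` for some entourage `e`. -/
def QuasiDense {X : Type*} (ε : Set (Set (X × X))) (A : Set X) : Prop :=
  ∃ e ∈ ε, Bnh A e = Set.univ

/-- A subset of a topological space is topologically bounded if its closure is compact. -/
def TopBounded {X : Type*} [TopologicalSpace X] (B : Set X) : Prop := IsCompact (closure B)

/-- A coarse structure on a topological space is proper if it contains a neighbourhood of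
the diagonal and every bounded set is topologically bounded. -/
def ProperCoarse {X : Type*} [TopologicalSpace X] (ε : Set (Set (X × X))) : Prop :=
  (∃ e ∈ ε, e ∈ nhdsSet (Set.diagonal X)) ∧ ∀ B : Set X, CBounded ε B → TopBounded B

/-! ### Artin–Wraith glueings -/

/-- An admissible map `f : Closed(X) → Closed(Y)`. -/
def Admissible {X Y : Type*} [TopologicalSpace X] [TopologicalSpace Y]
    (f : Set X → Set Y) : Prop :=
  (∀ A : Set X, IsClosed A → IsClosed (f A)) ∧
  (∀ A B : Set X, IsClosed A → IsClosed B → f (A ∪ B) = f A ∪ f B) ∧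
  f ∅ = ∅

/-- The closed sets of the Artin–Wraith glueing `X +_f Y`. -/
def AWClosed {X Y : Type*} [TopologicalSpace X] [TopologicalSpace Y]
    (f : Set X → Set Y) : Set (Set (X ⊕ Y)) :=
  {A | IsClosed (Sum.inl ⁻¹' A) ∧ IsClosed (Sum.inr ⁻¹' A) ∧
    Sum.inr '' f (Sum.inl ⁻¹' A) ⊆ A}

/-- The topology of the Artin–Wraith glueing `X +_f Y` on `X ⊕ Y`. (For admissible `f`,
the closed sets of this topology are exactly the members of `AWClosed f`.) -/
def AWTop {X Y : Type*} [TopologicalSpace X] [TopologicalSpace Y]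
    (f : Set X → Set Y) : TopologicalSpace (X ⊕ Y) :=
  TopologicalSpace.generateFrom (compl '' AWClosed f)

/-- `X +_f W` is a (Hausdorff) compactification of `X`: a compact Hausdorff Artin–Wraith
glueing in which `X` is dense. -/
def IsCompactification {X W : Type*} [TopologicalSpace X] [TopologicalSpace W]
    (f : Set X → Set W) : Prop :=
  Admissible f ∧
  @CompactSpace (X ⊕ W) (AWTop f) ∧
  @T2Space (X ⊕ W) (AWTop f) ∧
  @Dense (X ⊕ W) (AWTop f) (Set.range Sum.inl)

/-- A relation `e ⊆ X × X` is proper if `𝔅(B,e)` and `𝔅(B,e⁻¹)` are topologically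
bounded for every topologically bounded `B`. -/
def ProperRel {X : Type*} [TopologicalSpace X] (e : Set (X × X)) : Prop :=
  ∀ B : Set X, TopBounded B → TopBounded (Bnh B e) ∧ TopBounded (Bnh B (invRel e))

/-- `e` is a perspective subset of `X × X` with respect to the compactification `X +_f W`. -/
def PerspRel {X W : Type*} [TopologicalSpace X] [TopologicalSpace W]
    (f : Set X → Set W) (e : Set (X × X)) : Prop :=
  ProperRel e ∧
  ∀ y : W, ∀ V : Set (X ⊕ W), IsOpen[AWTop f] V → Sum.inr y ∈ V →
    ∃ U : Set (X ⊕ W), IsOpen[AWTop f] U ∧ Sum.inr y ∈ U ∧ U ⊆ V ∧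
      ∀ p ∈ e, Sum.inl p.1 ∈ U → Sum.inl p.2 ∈ V

/-- A perspective compactification of the coarse space `(X, ε)`. -/
def PerspCompactification {X W : Type*} [TopologicalSpace X] [TopologicalSpace W]
    (ε : Set (Set (X × X))) (f : Set X → Set W) : Prop :=
  IsCompactification f ∧ ∀ e ∈ ε, PerspRel f e

/-- The pullback of `f : Closed(X) → Closed(W)` with respect to `π : Y → X` and
`ϖ : Z → W`. -/
def pullbackAW {X Y Z W : Type*} [TopologicalSpace X] [TopologicalSpace Z]
    (f : Set X → Set W) (π : Y → X) (ϖ : Z → W) (A : Set Y) : Set Z :=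
  closure (ϖ ⁻¹' (f (closure (π '' A))))

/-! ### Group actions -/

/-- `φ : G → X → X` is an action by homeomorphisms. -/
def IsActionByHomeos {G X : Type*} [Group G] [TopologicalSpace X]
    (φ : G → X → X) : Prop :=
  (∀ g : G, Continuous (φ g)) ∧ (∀ x : X, φ 1 x = x) ∧
    ∀ g h : G, ∀ x : X, φ (g * h) x = φ g (φ h x)

/-- A properly discontinuous action. -/
def ProperlyDisc {G X : Type*} [TopologicalSpace X] (φ : G → X → X) : Prop :=
  ∀ K : Set X, IsCompact K → {g : G | (φ g '' K ∩ K).Nonempty}.Finite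

/-- A cocompact action. -/
def CocompactAct {G X : Type*} [TopologicalSpace X] (φ : G → X → X) : Prop :=
  ∃ K : Set X, IsCompact K ∧ (⋃ g : G, φ g '' K) = Set.univ

/-- The saturation `Sat(A) = {(φ(g,x), φ(g,x')) : g ∈ G, x, x' ∈ A}`. -/
def Sat {G X : Type*} (φ : G → X → X) (A : Set X) : Set (X × X) :=
  {p | ∃ g : G, ∃ x ∈ A, ∃ x' ∈ A, p = (φ g x, φ g x')}

/-- The coarse structure `ε_φ` on `X` generated by the saturations of topologically
bounded sets. -/
def coarseOfAction {G X : Type*} [TopologicalSpace X] (φ : G → X → X) :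
    Set (Set (X × X)) :=
  genCoarse {e | ∃ A : Set X, TopBounded A ∧ e = Sat φ A}

/-- The saturation for the left multiplication action of a group on itself. -/
def SatMul {G : Type*} [Group G] (U : Set G) : Set (G × G) :=
  {p | ∃ g : G, ∃ u ∈ U, ∃ u' ∈ U, p = (g * u, g * u')}

/-- The coarse structure `ε_G` on the group `G`, generated by the saturations of
finite subsets under the left multiplication action. -/
def coarseGroup (G : Type*) [Group G] : Set (Set (G × G)) :=
  genCoarse {e | ∃ U : Set G, U.Finite ∧ e = SatMul U}

/-- The compactification `X +_f W` is group-theoretically perspective with respect to the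
action `φ`. -/
def GTPerspective {G X W : Type*} [TopologicalSpace X] [TopologicalSpace W]
    (φ : G → X → X) (f : Set X → Set W) : Prop :=
  ∀ K : Set X, IsCompact K → ∀ y : W, ∀ U : Set (X ⊕ W),
    IsOpen[AWTop f] U → Sum.inr y ∈ U →
      ∃ V : Set (X ⊕ W), IsOpen[AWTop f] V ∧ Sum.inr y ∈ V ∧ V ⊆ U ∧
        ∀ g : G, (∃ x ∈ K, Sum.inl (φ g x) ∈ V) → ∀ x ∈ K, Sum.inl (φ g x) ∈ U

/-! ### Rays and accessibility -/

/-- A family `Ψ` of rays in `X` based at `p`: each member is a pair `(A, γ)` of a closed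
unbounded subset `A ⊆ [0,∞)` containing `0` and a map `γ : ℝ → X` (regarded on `A`) which
is injective on `A`, proper, and satisfies `γ 0 = p`. -/
def GoodRayFamily {X : Type*} [TopologicalSpace X] (p : X)
    (Ψ : Set (Set ℝ × (ℝ → X))) : Prop :=
  ∀ r ∈ Ψ, r.1 ⊆ Set.Ici (0 : ℝ) ∧ IsClosed r.1 ∧ ¬Bornology.IsBounded r.1 ∧
    (0 : ℝ) ∈ r.1 ∧ r.2 0 = p ∧ Set.InjOn r.2 r.1 ∧
    ∀ B : Set X, TopBounded B → Bornology.IsBounded (r.1 ∩ r.2 ⁻¹' B)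

/-- The compactification `X +_f W` is `Ψ`-accessible. -/
def AccessibleComp {X W : Type*} [TopologicalSpace X] [TopologicalSpace W]
    (f : Set X → Set W) (Ψ : Set (Set ℝ × (ℝ → X))) : Prop :=
  (∀ w : W, ∃ r ∈ Ψ, f (closure (r.2 '' r.1)) = {w}) ∧
  ∀ r ∈ Ψ, ∃ w : W, f (closure (r.2 '' r.1)) = {w}


/-
The orbit map `o : g ↦ φ(g, x₀)` sends `Sat(U)` into `Sat(o(U))`, hence is bornologous. For the
converse, proper discontinuity gives a concrete description of `ε_φ`: its entourages are the
subsets of `Δ ∪ Sat(K)` with `K` compact, since `Sat(K) ∘ Sat(L) ⊆ Sat(K ∪ ⋃_{g ∈ F} gL)` where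
`F = {g | g(K ∪ L) ∩ (K ∪ L) ≠ ∅}` is finite. Then `o⁻¹(Δ ∪ Sat(K)) ⊆ Sat(F)` for the finite set
`F = {g | gK' ∩ K' ≠ ∅}`, `K' = K ∪ {x₀}`. A bornologous map pulling entourages back to
entourages is a coarse embedding: any section over its image is a coarse quasi-inverse.
-/

section CoarseStructure

variable {X Y : Type*}

lemma IsCoarseStructure.diagonal_mem {ε : Set (Set (X × X))} (hε : IsCoarseStructure ε) :
    diagonal X ∈ ε :=
  hε.1

lemma IsCoarseStructure.mem_of_subset {ε : Set (Set (X × X))} (hε : IsCoarseStructure ε)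
    {e e' : Set (X × X)} (he : e ∈ ε) (h : e' ⊆ e) : e' ∈ ε :=
  hε.2.1 e he e' h

lemma isCoarseStructure_genCoarse (A : Set (Set (X × X))) : IsCoarseStructure (genCoarse A) :=
  ⟨fun _ hε => hε.1.1,
    fun e he e' h ε hε => hε.1.2.1 e (he ε hε) e' h,
    fun e he e' he' ε hε => hε.1.2.2.1 e (he ε hε) e' (he' ε hε),
    fun e he ε hε => hε.1.2.2.2.1 e (he ε hε),
    fun e he e' he' ε hε => hε.1.2.2.2.2 e (he ε hε) e' (he' ε hε)⟩

lemma subset_genCoarse (A : Set (Set (X × X))) : A ⊆ genCoarse A :=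
  fun _ ha _ hε => hε.2 ha

lemma genCoarse_subset {A ε : Set (Set (X × X))} (hε : IsCoarseStructure ε) (h : A ⊆ ε) :
    genCoarse A ⊆ ε :=
  fun _ he => he ε ⟨hε, h⟩

lemma image_invRel (f : X → Y) (e : Set (X × X)) :
    Prod.map f f '' invRel e = invRel (Prod.map f f '' e) := by
  ext ⟨a, b⟩
  simp only [invRel, mem_image, mem_ofPred_eq, Prod.exists, Prod.map_apply, Prod.mk.injEq]
  exact ⟨fun ⟨x, y, h, hx, hy⟩ => ⟨y, x, h, hy, hx⟩, fun ⟨x, y, h, hx, hy⟩ => ⟨y, x, h, hy, hx⟩⟩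

lemma image_compRel_subset (f : X → Y) (e e' : Set (X × X)) :
    Prod.map f f '' compRel e e' ⊆ compRel (Prod.map f f '' e) (Prod.map f f '' e') := by
  rintro _ ⟨⟨a, b⟩, ⟨c, hac, hcb⟩, rfl⟩
  exact ⟨f c, ⟨(a, c), hac, rfl⟩, ⟨(c, b), hcb, rfl⟩⟩

lemma IsCoarseStructure.setOf_image_mem {ζ : Set (Set (Y × Y))} (hζ : IsCoarseStructure ζ)
    (f : X → Y) : IsCoarseStructure {e : Set (X × X) | Prod.map f f '' e ∈ ζ} := by
  obtain ⟨hdiag, hsub, hunion, hinv, hcomp⟩ := hζ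
  refine ⟨hsub _ hdiag _ ?_, fun e he e' h => hsub _ he _ (image_mono h),
    fun e he e' he' => ?_, fun e he => ?_, fun e he e' he' => ?_⟩
  · rintro _ ⟨⟨a, b⟩, rfl : a = b, rfl⟩
    rfl
  · simpa only [mem_ofPred_eq, image_union] using hunion _ he _ he'
  · simpa only [mem_ofPred_eq, image_invRel] using hinv _ he
  · exact hsub _ (hcomp _ he _ he') _ (image_compRel_subset f e e')

lemma bornologous_genCoarse {A : Set (Set (X × X))} {ζ : Set (Set (Y × Y))}
    (hζ : IsCoarseStructure ζ) {f : X → Y} (hA : ∀ a ∈ A, Prod.map f f '' a ∈ ζ) :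
    Bornologous (genCoarse A) ζ f :=
  genCoarse_subset (hζ.setOf_image_mem f) hA

end CoarseStructure

section CoarseMaps

variable {X Y : Type*} {ε : Set (Set (X × X))} {ζ : Set (Set (Y × Y))} {f : X → Y}

lemma coarseMap_of_preimage_mem (hf : Bornologous ε ζ f)
    (hpre : ∀ e ∈ ζ, Prod.map f f ⁻¹' e ∈ ε) : CoarseMap ε ζ f :=
  ⟨hf, fun B hB => by simpa only [CBounded, preimage_prod_map_prod] using hpre _ hB⟩

lemma coarseEquiv_of_surjective (hε : IsCoarseStructure ε) (hζ : IsCoarseStructure ζ)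
    (hf : Bornologous ε ζ f) (hpre : ∀ e ∈ ζ, Prod.map f f ⁻¹' e ∈ ε)
    (hsurj : Function.Surjective f) : CoarseEquiv ε ζ f := by
  set g := Function.surjInv hsurj
  have hfg (y : Y) : f (g y) = y := Function.surjInv_eq hsurj y
  refine ⟨coarseMap_of_preimage_mem hf hpre, g, coarseMap_of_preimage_mem ?_ ?_, ?_, ?_⟩
  · refine fun e he => hε.mem_of_subset (hpre e he) ?_
    rintro _ ⟨⟨a, b⟩, hab, rfl⟩
    simpa only [mem_preimage, Prod.map_apply, hfg] using hab
  · refine fun e he => hζ.mem_of_subset (hf e he) ?_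
    rintro ⟨a, b⟩ hab
    exact ⟨(g a, g b), hab, by simp only [Prod.map_apply, hfg]⟩
  · refine hζ.mem_of_subset hζ.diagonal_mem ?_
    rintro _ ⟨y, rfl⟩
    exact hfg y
  · refine hε.mem_of_subset (hpre _ hζ.diagonal_mem) ?_
    rintro _ ⟨x, rfl⟩
    exact hfg (f x)

lemma bornologous_rangeFactorization (hf : Bornologous ε ζ f) :
    Bornologous ε (SubCoarse ζ (range f)) (rangeFactorization f) := by
  intro e he
  show Prod.map _ _ '' (Prod.map _ _ '' e) ∈ ζ
  rw [← image_comp]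
  exact hf e he

lemma preimage_rangeFactorization_mem (hpre : ∀ e ∈ ζ, Prod.map f f ⁻¹' e ∈ ε) :
    ∀ e ∈ SubCoarse ζ (range f),
      Prod.map (rangeFactorization f) (rangeFactorization f) ⁻¹' e ∈ ε := by
  intro e he
  have hval : Function.Injective
      (Prod.map (Subtype.val : range f → Y) (Subtype.val : range f → Y)) :=
    Subtype.val_injective.prodMap Subtype.val_injective
  have hcomp : Prod.map f f =
      Prod.map Subtype.val Subtype.val ∘ Prod.map (rangeFactorization f) (rangeFactorization f) :=
    rfl
  simpa only [hcomp, preimage_comp, preimage_image_eq _ hval] using hpre _ he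

lemma coarseEmbedding_of_preimage_mem (hε : IsCoarseStructure ε) (hζ : IsCoarseStructure ζ)
    (hf : Bornologous ε ζ f) (hpre : ∀ e ∈ ζ, Prod.map f f ⁻¹' e ∈ ε) :
    CoarseEmbedding ε ζ f :=
  ⟨coarseMap_of_preimage_mem hf hpre,
    coarseEquiv_of_surjective hε (hζ.setOf_image_mem Subtype.val)
      (bornologous_rangeFactorization hf) (preimage_rangeFactorization_mem hpre)
      rangeFactorization_surjective⟩

end CoarseMaps

section Action

variable {G X : Type*} {φ : G → X → X}

def returnSet (φ : G → X → X) (K : Set X) : Set G := {g | (φ g '' K ∩ K).Nonempty}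

lemma sat_mono (φ : G → X → X) {A B : Set X} (h : A ⊆ B) : Sat φ A ⊆ Sat φ B := by
  rintro _ ⟨g, x, hx, x', hx', rfl⟩
  exact ⟨g, x, h hx, x', h hx', rfl⟩

lemma invRel_sat_subset (φ : G → X → X) (A : Set X) : invRel (Sat φ A) ⊆ Sat φ A := by
  rintro ⟨a, b⟩ ⟨g, x, hx, x', hx', h⟩
  simp only [Prod.mk.injEq] at h
  exact ⟨g, x', hx', x, hx, by rw [h.1, h.2]⟩

variable [TopologicalSpace X]

lemma sat_mem_coarseOfAction [T2Space X] {K : Set X} (hK : IsCompact K) :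
    Sat φ K ∈ coarseOfAction φ :=
  subset_genCoarse _ ⟨K, by rw [TopBounded, hK.isClosed.closure_eq]; exact hK, rfl⟩

variable [Group G]

lemma IsActionByHomeos.inv_apply_apply (hact : IsActionByHomeos φ) (g : G) (x : X) :
    φ g⁻¹ (φ g x) = x := by
  rw [← hact.2.2, inv_mul_cancel, hact.2.1]

/- If `g x' = h y` with `x' ∈ K` and `y ∈ L`, then `g⁻¹ h` moves a point of `K ∪ L` back into
`K ∪ L`, and `(g x, h y') = (g x, g (g⁻¹ h y'))`. -/
lemma IsActionByHomeos.compRel_sat_subset (hact : IsActionByHomeos φ) (K L : Set X) :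
    compRel (Sat φ K) (Sat φ L) ⊆
      Sat φ (K ∪ ⋃ g ∈ returnSet φ (K ∪ L), φ g '' L) := by
  rintro ⟨a, b⟩ ⟨c, ⟨g, x, hx, x', hx', hac⟩, ⟨h, y, hy, y', hy', hcb⟩⟩
  simp only [Prod.mk.injEq] at hac hcb
  obtain ⟨rfl, rfl⟩ := hac
  obtain ⟨hxy, rfl⟩ := hcb
  have hy_to_x' : φ (g⁻¹ * h) y = x' := by rw [hact.2.2, ← hxy, hact.inv_apply_apply]
  have hret : g⁻¹ * h ∈ returnSet φ (K ∪ L) :=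
    ⟨x', ⟨y, Or.inr hy, hy_to_x'⟩, Or.inl hx'⟩
  refine ⟨g, x, Or.inl hx, φ (g⁻¹ * h) y', Or.inr (mem_biUnion hret ⟨y', hy', rfl⟩), ?_⟩
  rw [← hact.2.2, mul_inv_cancel_left]

lemma isCoarseStructure_subset_diagonal_union_sat (hact : IsActionByHomeos φ)
    (hpd : ProperlyDisc φ) :
    IsCoarseStructure {e : Set (X × X) | ∃ K, IsCompact K ∧ e ⊆ diagonal X ∪ Sat φ K} := by
  refine ⟨⟨∅, isCompact_empty, subset_union_left⟩, ?_, ?_, ?_, ?_⟩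
  · rintro e ⟨K, hK, he⟩ e' h
    exact ⟨K, hK, h.trans he⟩
  · rintro e ⟨K, hK, he⟩ e' ⟨L, hL, he'⟩
    exact ⟨K ∪ L, hK.union hL, union_subset
      (he.trans (union_subset_union_right _ (sat_mono φ subset_union_left)))
      (he'.trans (union_subset_union_right _ (sat_mono φ subset_union_right)))⟩
  · rintro e ⟨K, hK, he⟩
    refine ⟨K, hK, fun p hp => ?_⟩
    rcases he hp with h | h
    · exact Or.inl (Eq.symm h)
    · exact Or.inr (invRel_sat_subset φ K h)
  · rintro e ⟨K, hK, he⟩ e' ⟨L, hL, he'⟩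
    set M := K ∪ ⋃ g ∈ returnSet φ (K ∪ L), φ g '' L
    have hM : IsCompact M :=
      hK.union ((hpd _ (hK.union hL)).isCompact_biUnion fun g _ => hL.image (hact.1 g))
    refine ⟨K ∪ L ∪ M, (hK.union hL).union hM, ?_⟩
    rintro ⟨a, b⟩ ⟨c, hac, hcb⟩
    rcases he hac with h1 | h1 <;> rcases he' hcb with h2 | h2
    · exact Or.inl ((h1 : a = c).trans h2)
    · obtain rfl : a = c := h1
      exact Or.inr (sat_mono φ (subset_union_right.trans subset_union_left) h2)
    · obtain rfl : c = b := h2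
      exact Or.inr (sat_mono φ (subset_union_left.trans subset_union_left) h1)
    · exact Or.inr (sat_mono φ subset_union_right (hact.compRel_sat_subset K L ⟨c, h1, h2⟩))

lemma exists_isCompact_of_mem_coarseOfAction (hact : IsActionByHomeos φ)
    (hpd : ProperlyDisc φ) {e : Set (X × X)} (he : e ∈ coarseOfAction φ) :
    ∃ K, IsCompact K ∧ e ⊆ diagonal X ∪ Sat φ K := by
  refine genCoarse_subset (isCoarseStructure_subset_diagonal_union_sat hact hpd) ?_ he
  rintro _ ⟨A, hA, rfl⟩
  exact ⟨closure A, hA, (sat_mono φ subset_closure).trans subset_union_right⟩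

lemma IsActionByHomeos.image_orbit_satMul_subset (hact : IsActionByHomeos φ) (x₀ : X)
    (U : Set G) : Prod.map (φ · x₀) (φ · x₀) '' SatMul U ⊆ Sat φ ((φ · x₀) '' U) := by
  rintro _ ⟨_, ⟨g, u, hu, u', hu', rfl⟩, rfl⟩
  exact ⟨g, φ u x₀, mem_image_of_mem _ hu, φ u' x₀, mem_image_of_mem _ hu',
    by simp only [Prod.map_apply, hact.2.2]⟩

lemma IsActionByHomeos.preimage_orbit_subset_satMul (hact : IsActionByHomeos φ) {x₀ : X}
    {K A : Set X} (hx₀ : x₀ ∈ K) (hA : A ⊆ K) :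
    Prod.map (φ · x₀) (φ · x₀) ⁻¹' (diagonal X ∪ Sat φ A) ⊆
      SatMul (returnSet φ K) := by
  have hret (g : G) (hg : φ g x₀ ∈ K) : g ∈ returnSet φ K :=
    ⟨φ g x₀, mem_image_of_mem _ hx₀, hg⟩
  rintro ⟨a, b⟩ (hab | ⟨h, x, hx, x', hx', hab⟩)
  · have hab : φ a x₀ = φ b x₀ := hab
    have hfix : φ (a⁻¹ * b) x₀ = x₀ := by rw [hact.2.2, ← hab, hact.inv_apply_apply]
    exact ⟨a, 1, hret 1 (by rwa [hact.2.1]), a⁻¹ * b, hret _ (by rwa [hfix]), by simp⟩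
  · simp only [Prod.map_apply, Prod.mk.injEq] at hab
    have ha : φ (h⁻¹ * a) x₀ = x := by rw [hact.2.2, hab.1, hact.inv_apply_apply]
    have hb : φ (h⁻¹ * b) x₀ = x' := by rw [hact.2.2, hab.2, hact.inv_apply_apply]
    exact ⟨h, h⁻¹ * a, hret _ (ha ▸ hA hx), h⁻¹ * b, hret _ (hb ▸ hA hx'), by simp⟩

lemma bornologous_orbit [T2Space X] (hact : IsActionByHomeos φ) (x₀ : X) :
    Bornologous (coarseGroup G) (coarseOfAction φ) (φ · x₀) := by
  refine bornologous_genCoarse (isCoarseStructure_genCoarse _) ?_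
  rintro _ ⟨U, hU, rfl⟩
  exact (isCoarseStructure_genCoarse _).mem_of_subset
    (sat_mem_coarseOfAction (hU.image _).isCompact) (hact.image_orbit_satMul_subset x₀ U)

lemma preimage_orbit_mem_coarseGroup (hact : IsActionByHomeos φ) (hpd : ProperlyDisc φ)
    (x₀ : X) : ∀ e ∈ coarseOfAction φ, Prod.map (φ · x₀) (φ · x₀) ⁻¹' e ∈ coarseGroup G := by
  intro e he
  obtain ⟨K, hK, he⟩ := exists_isCompact_of_mem_coarseOfAction hact hpd he
  refine (isCoarseStructure_genCoarse _).mem_of_subset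
    (subset_genCoarse _ ⟨_, hpd (K ∪ {x₀}) (hK.union isCompact_singleton), rfl⟩) ?_
  exact (preimage_mono he).trans
    (hact.preimage_orbit_subset_satMul (mem_union_right _ rfl) subset_union_left)

end Action

theorem stmt8_general {G X : Type*} [Group G] [TopologicalSpace X] [T2Space X]
    (φ : G → X → X) (hact : IsActionByHomeos φ) (hpd : ProperlyDisc φ) (x₀ : X) :
    CoarseEmbedding (coarseGroup G) (coarseOfAction φ) (fun g => φ g x₀) :=
  coarseEmbedding_of_preimage_mem (isCoarseStructure_genCoarse _) (isCoarseStructure_genCoarse _)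
    (bornologous_orbit hact x₀) (preimage_orbit_mem_coarseGroup hact hpd x₀)

/-- the orbit map `g ↦ φ(g, x₀)` is a coarse embedding
`(G, ε_G) → (X, ε_φ)`. -/
theorem stmt8 {G X : Type*} [Group G] [TopologicalSpace X] [T2Space X]
    [LocallyCompactSpace X] [ParacompactSpace X]
    (φ : G → X → X) (hact : IsActionByHomeos φ) (hpd : ProperlyDisc φ) (x₀ : X) :
    CoarseEmbedding (coarseGroup G) (coarseOfAction φ) (fun g => φ g x₀) :=
  stmt8_general φ hact hpd x₀

end Paper
end

section
/- Let G be a group, X a Hausdorff locally compact paracompact space, φ : G ↷ X a properly discontinuous and cocompact action by homeomorphisms, and X +_f W a Hausdorff compactification of X such that φ extends continuously to an action on X +_f W. Then X +_f W is group-theoretically perspective if and only if ε_φ ⊆ ε_f, i.e. every element of ε_φ is a perspective subset of X × X with respect to X +_f W. -/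
namespace Paper

open Set Topology

/-! ### Auxiliary lemmas -/

section Aux

variable {X : Type*} [TopologicalSpace X]

lemma topBounded_mono {A B : Set X} (h : A ⊆ B) (hB : TopBounded B) : TopBounded A :=
  hB.of_isClosed_subset isClosed_closure (closure_mono h)

lemma topBounded_of_subset_compact [T2Space X] {A C : Set X} (hC : IsCompact C)
    (h : A ⊆ C) : TopBounded A :=
  hC.of_isClosed_subset isClosed_closure (closure_minimal h hC.isClosed)

lemma topBounded_union {A B : Set X} (hA : TopBounded A) (hB : TopBounded B) :
    TopBounded (A ∪ B) := by
  unfold TopBounded at *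
  rw [closure_union]
  exact hA.union hB

lemma invRel_invRel {Y : Type*} (e : Set (Y × Y)) : invRel (invRel e) = e := rfl

lemma invRel_mono {Y : Type*} {e e' : Set (Y × Y)} (h : e' ⊆ e) : invRel e' ⊆ invRel e :=
  fun _ hp => h hp

lemma invRel_union {Y : Type*} (e e' : Set (Y × Y)) :
    invRel (e ∪ e') = invRel e ∪ invRel e' := rfl

lemma invRel_comp {Y : Type*} (e e' : Set (Y × Y)) :
    invRel (compRel e e') = compRel (invRel e') (invRel e) := by
  ext ⟨a, b⟩
  simp only [invRel, compRel, Set.mem_setOf_eq]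
  tauto

lemma bnh_mono {B : Set X} {e e' : Set (X × X)} (h : e' ⊆ e) : Bnh B e' ⊆ Bnh B e :=
  fun x ⟨y, hy, hxy⟩ => ⟨y, hy, h hxy⟩

lemma bnh_union (B : Set X) (e e' : Set (X × X)) :
    Bnh B (e ∪ e') = Bnh B e ∪ Bnh B e' := by
  ext x
  constructor
  · rintro ⟨y, hy, hxy | hxy⟩
    · exact Or.inl ⟨y, hy, hxy⟩
    · exact Or.inr ⟨y, hy, hxy⟩
  · rintro (⟨y, hy, hxy⟩ | ⟨y, hy, hxy⟩)
    · exact ⟨y, hy, Or.inl hxy⟩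
    · exact ⟨y, hy, Or.inr hxy⟩

lemma bnh_comp (B : Set X) (e e' : Set (X × X)) :
    Bnh B (compRel e e') = Bnh (Bnh B e') e := by
  ext x
  simp only [Bnh, compRel, Set.mem_setOf_eq]
  tauto

lemma bnh_diagonal (B : Set X) : Bnh B (Set.diagonal X) = B := by
  ext x
  simp only [Bnh, Set.mem_setOf_eq, Set.mem_diagonal_iff]
  constructor
  · rintro ⟨y, hy, h⟩; exact h ▸ hy
  · intro hx; exact ⟨x, hx, rfl⟩

lemma properRel_diagonal : ProperRel (Set.diagonal X) := by
  intro B hB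
  have h : invRel (Set.diagonal X) = Set.diagonal X := by
    ext ⟨a, b⟩
    simp only [invRel, Set.mem_setOf_eq, Set.mem_diagonal_iff]
    exact eq_comm
  rw [h, bnh_diagonal]
  exact ⟨hB, hB⟩

lemma properRel_mono {e e' : Set (X × X)} (h : e' ⊆ e) (he : ProperRel e) :
    ProperRel e' := fun B hB =>
  ⟨topBounded_mono (bnh_mono h) (he B hB).1,
   topBounded_mono (bnh_mono (invRel_mono h)) (he B hB).2⟩

lemma properRel_union {e e' : Set (X × X)} (he : ProperRel e) (he' : ProperRel e') :
    ProperRel (e ∪ e') := by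
  intro B hB
  rw [invRel_union, bnh_union, bnh_union]
  exact ⟨topBounded_union (he B hB).1 (he' B hB).1,
    topBounded_union (he B hB).2 (he' B hB).2⟩

lemma properRel_comp {e e' : Set (X × X)} (he : ProperRel e) (he' : ProperRel e') :
    ProperRel (compRel e e') := by
  intro B hB
  rw [bnh_comp, invRel_comp, bnh_comp]
  exact ⟨(he _ (he' B hB).1).1, (he' _ (he B hB).2).2⟩

variable {W : Type*} [TopologicalSpace W] {f : Set X → Set W}

lemma perspRel_diagonal : PerspRel f (Set.diagonal X) := by
  refine ⟨properRel_diagonal, fun y V hV hyV => ⟨V, hV, hyV, subset_rfl, ?_⟩⟩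
  rintro ⟨a, b⟩ hab h
  rw [Set.mem_diagonal_iff] at hab
  exact hab ▸ h

lemma perspRel_mono {e e' : Set (X × X)} (h : e' ⊆ e) (he : PerspRel f e) :
    PerspRel f e' := by
  refine ⟨properRel_mono h he.1, fun y V hV hyV => ?_⟩
  obtain ⟨U, hU, hyU, hUV, hpe⟩ := he.2 y V hV hyV
  exact ⟨U, hU, hyU, hUV, fun p hp => hpe p (h hp)⟩

lemma perspRel_union {e e' : Set (X × X)} (he : PerspRel f e) (he' : PerspRel f e') :
    PerspRel f (e ∪ e') := by
  refine ⟨properRel_union he.1 he'.1, fun y V hV hyV => ?_⟩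
  obtain ⟨U1, hU1, hyU1, hU1V, hpe1⟩ := he.2 y V hV hyV
  obtain ⟨U2, hU2, hyU2, hU2V, hpe2⟩ := he'.2 y V hV hyV
  refine ⟨U1 ∩ U2, @IsOpen.inter _ (AWTop f) _ _ hU1 hU2, ⟨hyU1, hyU2⟩, fun z hz => hU1V hz.1, ?_⟩
  rintro p (hp | hp) hpU
  · exact hpe1 p hp hpU.1
  · exact hpe2 p hp hpU.2

lemma perspRel_comp {e e' : Set (X × X)} (he : PerspRel f e) (he' : PerspRel f e') :
    PerspRel f (compRel e e') := by
  refine ⟨properRel_comp he.1 he'.1, fun y V hV hyV => ?_⟩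
  obtain ⟨U', hU', hyU', hU'V, hpe'⟩ := he'.2 y V hV hyV
  obtain ⟨U, hU, hyU, hUU', hpe⟩ := he.2 y U' hU' hyU'
  refine ⟨U, hU, hyU, hUU'.trans hU'V, ?_⟩
  rintro ⟨a, b⟩ ⟨c, hac, hcb⟩ haU
  exact hpe' (c, b) hcb (hpe (a, c) hac haU)

end Aux

section SatLemmas

variable {G X : Type*} [TopologicalSpace X] [T2Space X] (φ : G → X → X)

lemma invRel_sat (A : Set X) : invRel (Sat φ A) = Sat φ A := by
  ext ⟨a, b⟩
  simp only [invRel, Sat, Set.mem_setOf_eq, Prod.mk.injEq]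
  constructor
  · rintro ⟨g, x, hx, x', hx', h1, h2⟩
    exact ⟨g, x', hx', x, hx, h2, h1⟩
  · rintro ⟨g, x, hx, x', hx', h1, h2⟩
    exact ⟨g, x', hx', x, hx, h2, h1⟩

variable [Group G]

lemma properRel_sat (hact : IsActionByHomeos φ) (hpd : ProperlyDisc φ)
    {A : Set X} (hA : TopBounded A) : ProperRel (Sat φ A) := by
  have key : ∀ B : Set X, TopBounded B → TopBounded (Bnh B (Sat φ A)) := by
    intro B hB
    set K : Set X := closure A ∪ closure B with hK
    have hKc : IsCompact K := hA.union hB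
    have hF : {g : G | (φ g '' K ∩ K).Nonempty}.Finite := hpd K hKc
    have hsub : Bnh B (Sat φ A) ⊆ ⋃ g ∈ {g : G | (φ g '' K ∩ K).Nonempty}, φ g '' closure A := by
      rintro x ⟨b, hb, g, a, ha, a', ha', heq⟩
      simp only [Prod.mk.injEq] at heq
      have hgF : g ∈ {g : G | (φ g '' K ∩ K).Nonempty} := by
        refine ⟨b, ⟨a', ?_, heq.2.symm⟩, Or.inr (subset_closure hb)⟩
        exact Or.inl (subset_closure ha')
      exact Set.mem_biUnion hgF ⟨a, subset_closure ha, heq.1.symm⟩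
    have hcpt : IsCompact (⋃ g ∈ {g : G | (φ g '' K ∩ K).Nonempty}, φ g '' closure A) :=
      hF.isCompact_biUnion (fun g _ => hA.image (hact.1 g))
    exact topBounded_of_subset_compact hcpt hsub
  intro B hB
  rw [invRel_sat]
  exact ⟨key B hB, key B hB⟩

end SatLemmas

/-- an equivariant Hausdorff compactification `X +_f W` is
group-theoretically perspective iff `ε_φ ⊆ ε_f`, i.e. every element of `ε_φ` is a
perspective subset of `X × X` with respect to `X +_f W`. -/
theorem stmt10 {G X W : Type*} [Group G] [TopologicalSpace X] [T2Space X]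
    [LocallyCompactSpace X] [ParacompactSpace X] [TopologicalSpace W]
    (φ : G → X → X) (hact : IsActionByHomeos φ) (hpd : ProperlyDisc φ)
    (hcc : CocompactAct φ)
    (f : Set X → Set W) (hcomp : IsCompactification f)
    (Φ : G → (X ⊕ W) → (X ⊕ W))
    (hΦcont : ∀ g : G, Continuous[AWTop f, AWTop f] (Φ g))
    (hΦone : ∀ p : X ⊕ W, Φ 1 p = p)
    (hΦmul : ∀ g h : G, ∀ p : X ⊕ W, Φ (g * h) p = Φ g (Φ h p))
    (hext : ∀ (g : G) (x : X), Φ g (Sum.inl x) = Sum.inl (φ g x)) :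
    GTPerspective φ f ↔ ∀ e ∈ coarseOfAction φ, PerspRel f e := by
  constructor
  · -- GTPerspective → every element of ε_φ is perspective
    intro hgt
    -- the symmetric perspective relations form a coarse structure containing the generators
    set ε : Set (Set (X × X)) := {e | PerspRel f e ∧ PerspRel f (invRel e)} with hε
    have hsat : ∀ A : Set X, TopBounded A → PerspRel f (Sat φ A) := by
      intro A hA
      refine ⟨properRel_sat φ hact hpd hA, fun y V hV hyV => ?_⟩
      obtain ⟨U, hU, hyU, hUV, hper⟩ := hgt (closure A) hA y V hV hyV
      refine ⟨U, hU, hyU, hUV, ?_⟩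
      rintro ⟨a, b⟩ ⟨g, x, hx, x', hx', heq⟩ haU
      simp only [Prod.mk.injEq] at heq
      obtain ⟨rfl, rfl⟩ := heq
      exact hper g ⟨x, subset_closure hx, haU⟩ x' (subset_closure hx')
    have hεcs : IsCoarseStructure ε := by
      refine ⟨?_, ?_, ?_, ?_, ?_⟩
      · -- diagonal
        have hd : invRel (Set.diagonal X) = Set.diagonal X := by
          ext ⟨a, b⟩
          simp only [invRel, Set.mem_setOf_eq, Set.mem_diagonal_iff]
          exact eq_comm
        exact ⟨perspRel_diagonal, hd ▸ perspRel_diagonal⟩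
      · -- subsets
        exact fun e he e' h => ⟨perspRel_mono h he.1, perspRel_mono (invRel_mono h) he.2⟩
      · -- unions
        intro e he e' he'
        exact ⟨perspRel_union he.1 he'.1,
          (invRel_union e e') ▸ perspRel_union he.2 he'.2⟩
      · -- inverses
        exact fun e he => ⟨he.2, (invRel_invRel e) ▸ he.1⟩
      · -- compositions
        intro e he e' he'
        exact ⟨perspRel_comp he.1 he'.1,
          (invRel_comp e e') ▸ perspRel_comp he'.2 he.2⟩
    have hgen : {e : Set (X × X) | ∃ A : Set X, TopBounded A ∧ e = Sat φ A} ⊆ ε := by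
      rintro e ⟨A, hA, rfl⟩
      exact ⟨hsat A hA, (invRel_sat φ A) ▸ hsat A hA⟩
    intro e he
    have : e ∈ ε := he ε ⟨hεcs, hgen⟩
    exact this.1
  · -- ε_φ ⊆ ε_f → GTPerspective
    intro hpersp K hK y U hU hyU
    have hKb : TopBounded K := by
      unfold TopBounded
      rwa [hK.isClosed.closure_eq]
    have hmem : Sat φ K ∈ coarseOfAction φ := by
      intro ε hε
      exact hε.2 ⟨K, hKb, rfl⟩
    obtain ⟨V, hV, hyV, hVU, hper⟩ := (hpersp _ hmem).2 y U hU hyU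
    refine ⟨V, hV, hyV, hVU, ?_⟩
    rintro g ⟨x, hx, hxV⟩ x' hx'
    exact hper (φ g x, φ g x') ⟨g, x, hx, x', hx', rfl⟩ hxV

end Paper
end

section
/- Let G be a countable group, X a Hausdorff locally compact space with countable basis, φ : G ↷ X a properly discontinuous and cocompact action by homeomorphisms, K ⊆ X a fundamental domain (a compact set with φ(G, K) = X), and x₀ ∈ X. Let X +_f W be a metrizable Hausdorff compactification of X to which φ extends continuously and which is group-theoretically perspective. Then for every subset F ⊆ G, f(Cl_X({φ(g, x₀) : g ∈ F})) = f(Cl_X({φ(g, k) : g ∈ F, k ∈ K})); that is, the pullback of f along the orbit map g ↦ φ(g, x₀) coincides with the map f_Λ(F) = f(φ(F, K)). -/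
namespace Paper

open Set Topology

/-! A boundary point `w` lies in `f (closure A)` exactly when `inr w` lies in the closure of
`inl '' A` in `X +_f W`. Apply group-theoretic perspectivity to the compact set `{x₀} ∪ K`:
a neighbourhood `V` of `w` that meets a translate `φ g '' ({x₀} ∪ K)` forces the whole
translate into the given neighbourhood `U`, so the orbit of `x₀` and the translates of `K`
accumulate at the same boundary points. -/

section ArtinWraith

variable {X W : Type*} [TopologicalSpace X] [TopologicalSpace W] {f : Set X → Set W}

theorem Admissible.mono (hf : Admissible f) {A B : Set X} (hA : IsClosed A) (hB : IsClosed B)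
    (hAB : A ⊆ B) : f A ⊆ f B := by
  rw [← union_eq_self_of_subset_left hAB, hf.2.1 A B hA hB]
  exact subset_union_left

theorem Admissible.empty_mem_awClosed (hf : Admissible f) : ∅ ∈ AWClosed f :=
  ⟨isClosed_empty, isClosed_empty, by simp [hf.2.2]⟩

theorem Admissible.union_mem_awClosed (hf : Admissible f) {C D : Set (X ⊕ W)}
    (hC : C ∈ AWClosed f) (hD : D ∈ AWClosed f) : C ∪ D ∈ AWClosed f := by
  refine ⟨hC.1.union hD.1, hC.2.1.union hD.2.1, ?_⟩
  rw [preimage_union, hf.2.1 _ _ hC.1 hD.1, image_union]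
  exact union_subset_union hC.2.2 hD.2.2

theorem Admissible.sInter_mem_awClosed (hf : Admissible f) {S : Set (Set (X ⊕ W))}
    (hS : S ⊆ AWClosed f) : ⋂₀ S ∈ AWClosed f := by
  have hX : IsClosed (Sum.inl ⁻¹' ⋂₀ S : Set X) := by
    rw [preimage_sInter]; exact isClosed_biInter fun C hC => (hS hC).1
  refine ⟨hX, ?_, ?_⟩
  · rw [preimage_sInter]; exact isClosed_biInter fun C hC => (hS hC).2.1
  · refine subset_sInter fun C hC => (image_mono ?_).trans (hS hC).2.2
    exact hf.mono hX (hS hC).1 (preimage_mono (sInter_subset_of_mem hC))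

theorem Admissible.awTop_eq_ofClosed (hf : Admissible f) :
    AWTop f = .ofClosed (AWClosed f) hf.empty_mem_awClosed
      (fun _ => hf.sInter_mem_awClosed) (fun _ hC _ hD => hf.union_mem_awClosed hC hD) := by
  refine le_antisymm (fun s hs => ?_) (TopologicalSpace.le_generateFrom_iff_subset_isOpen.2 ?_)
  · exact TopologicalSpace.isOpen_generateFrom_of_mem ⟨sᶜ, hs, compl_compl s⟩
  · rintro _ ⟨C, hC, rfl⟩
    simpa [isOpen_mk] using hC

theorem Admissible.isClosed_awTop_iff (hf : Admissible f) {C : Set (X ⊕ W)} :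
    IsClosed[AWTop f] C ↔ C ∈ AWClosed f := by
  rw [← @isOpen_compl_iff, hf.awTop_eq_ofClosed, isOpen_mk, compl_compl]

theorem Admissible.closure_inl_image (hf : Admissible f) (A : Set X) :
    closure[AWTop f] (Sum.inl '' A) = Sum.inl '' closure A ∪ Sum.inr '' f (closure A) := by
  let _ := AWTop f
  apply subset_antisymm
  · refine closure_minimal (image_mono subset_closure |>.trans subset_union_left)
      (hf.isClosed_awTop_iff.2 ⟨?_, ?_, ?_⟩)
    all_goals simp only [preimage_union, Sum.inl_injective.preimage_image,
      Sum.inr_injective.preimage_image, preimage_inl_image_inr, preimage_inr_image_inl,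
      union_empty, empty_union]
    exacts [isClosed_closure, hf.1 _ isClosed_closure, subset_union_right]
  · have hC := hf.isClosed_awTop_iff.1 (isClosed_closure (s := Sum.inl '' A))
    have hA : closure A ⊆ Sum.inl ⁻¹' closure (Sum.inl '' A) :=
      closure_minimal (fun x hx => subset_closure (mem_image_of_mem _ hx)) hC.1
    refine union_subset (image_subset_iff.2 hA) ((image_mono ?_).trans hC.2.2)
    exact hf.mono isClosed_closure hC.1 hA

theorem Admissible.inr_mem_closure_inl_image_iff (hf : Admissible f) (A : Set X) (w : W) :
    Sum.inr w ∈ closure[AWTop f] (Sum.inl '' A) ↔ w ∈ f (closure A) := by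
  simp [hf.closure_inl_image]

end ArtinWraith

section GTPerspective

variable {G X W : Type*} [TopologicalSpace X] [TopologicalSpace W] {φ : G → X → X}
  {f : Set X → Set W}

theorem GTPerspective.inr_mem_closure_biUnion_image (hpers : GTPerspective φ f) {L S T : Set X}
    (hL : IsCompact L) (hSL : S ⊆ L) (hTL : T ⊆ L) (hT : T.Nonempty) (F : Set G) {w : W}
    (hw : Sum.inr w ∈ closure[AWTop f] (Sum.inl '' ⋃ g ∈ F, φ g '' S)) :
    Sum.inr w ∈ closure[AWTop f] (Sum.inl '' ⋃ g ∈ F, φ g '' T) := by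
  let _ := AWTop f
  rw [mem_closure_iff] at hw ⊢
  intro U hU hwU
  obtain ⟨V, hV, hwV, -, hVU⟩ := hpers L hL w U hU hwU
  obtain ⟨_, hpV, x, hx, rfl⟩ := hw V hV hwV
  obtain ⟨g, hg, s, hs, rfl⟩ : ∃ g ∈ F, ∃ s ∈ S, φ g s = x := by simpa using hx
  obtain ⟨t, ht⟩ := hT
  exact ⟨_, hVU g ⟨s, hSL hs, hpV⟩ t (hTL ht),
    mem_image_of_mem _ (mem_biUnion hg (mem_image_of_mem _ ht))⟩

theorem GTPerspective.f_closure_biUnion_image_eq (hf : Admissible f) (hpers : GTPerspective φ f)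
    {S T : Set X} (hS : IsCompact S) (hT : IsCompact T) (hS₀ : S.Nonempty) (hT₀ : T.Nonempty)
    (F : Set G) : f (closure (⋃ g ∈ F, φ g '' S)) = f (closure (⋃ g ∈ F, φ g '' T)) := by
  ext w
  simp only [← hf.inr_mem_closure_inl_image_iff]
  have hL := hS.union hT
  exact ⟨hpers.inr_mem_closure_biUnion_image hL subset_union_left subset_union_right hT₀ F,
    hpers.inr_mem_closure_biUnion_image hL subset_union_right subset_union_left hS₀ F⟩

end GTPerspective

theorem stmt11_general {G X W : Type*} [TopologicalSpace X] [TopologicalSpace W]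
    (φ : G → X → X)
    (K : Set X) (hK : IsCompact K) (hKfd : (⋃ g : G, φ g '' K) = Set.univ)
    (x₀ : X)
    (f : Set X → Set W) (hcomp : IsCompactification f)
    (hpers : GTPerspective φ f) :
    ∀ F : Set G,
      f (closure ((fun g => φ g x₀) '' F)) = f (closure (⋃ g ∈ F, φ g '' K)) := by
  intro F
  obtain ⟨g, hg⟩ := mem_iUnion.1 (hKfd ▸ mem_univ x₀)
  have horbit : (fun g => φ g x₀) '' F = ⋃ g ∈ F, φ g '' {x₀} := by
    rw [image_eq_iUnion]; simp only [image_singleton]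
  rw [horbit]
  exact hpers.f_closure_biUnion_image_eq hcomp.1 isCompact_singleton hK (singleton_nonempty x₀)
    (Nonempty.of_image ⟨x₀, hg⟩) F

/-- for a metrizable group-theoretically perspective equivariant
compactification `X +_f W`, the pullback of `f` along the orbit map `g ↦ φ(g, x₀)`
coincides with `f_Λ(F) = f(φ(F, K))`: for every `F ⊆ G`,
`f(Cl_X {φ(g,x₀) : g ∈ F}) = f(Cl_X {φ(g,k) : g ∈ F, k ∈ K})`. -/
theorem stmt11 {G X W : Type*} [Group G] [Countable G] [TopologicalSpace X] [T2Space X]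
    [LocallyCompactSpace X] [SecondCountableTopology X] [TopologicalSpace W]
    (φ : G → X → X) (hact : IsActionByHomeos φ) (hpd : ProperlyDisc φ)
    (K : Set X) (hK : IsCompact K) (hKfd : (⋃ g : G, φ g '' K) = Set.univ)
    (x₀ : X)
    (f : Set X → Set W) (hcomp : IsCompactification f)
    (hmetr : @TopologicalSpace.MetrizableSpace (X ⊕ W) (AWTop f))
    (Φ : G → (X ⊕ W) → (X ⊕ W))
    (hΦcont : ∀ g : G, Continuous[AWTop f, AWTop f] (Φ g))
    (hΦone : ∀ p : X ⊕ W, Φ 1 p = p)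
    (hΦmul : ∀ g h : G, ∀ p : X ⊕ W, Φ (g * h) p = Φ g (Φ h p))
    (hext : ∀ (g : G) (x : X), Φ g (Sum.inl x) = Sum.inl (φ g x))
    (hpers : GTPerspective φ f) :
    ∀ F : Set G,
      f (closure ((fun g => φ g x₀) '' F)) = f (closure (⋃ g ∈ F, φ g '' K)) :=
  stmt11_general φ K hK hKfd x₀ f hcomp hpers

end Paper
end
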